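/- arXiv:1203.5595 — 2 statements merged into one kernel-verified Lean document; each statement's English description precedes it below -/
import Mathlib

section
/- For formal power series f₁, f₂ in K[[x₁,...,x_k]] over a field K (with f₁f₂ ≠ 0), the Newton polyhedron of the product equals the sum of the Newton polyhedra: N(f₁·f₂) = N(f₁) + N(f₂). -/
open Pointwise

/-- The positive quadrant `ℝ≥0^k`. -/
def Qk (k : ℕ) : Set (Fin k → ℝ) := {x | ∀ i, 0 ≤ x i}

/-- The Newton polyhedron of a multivariate power series: the convex hull of
`⋃_{A ∈ Supp f} (A + ℝ≥0^k)`. -/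
noncomputable def newtonPolyhedron {k : ℕ} {K : Type*} [Field K]
    (f : MvPowerSeries (Fin k) K) : Set (Fin k → ℝ) :=
  convexHull ℝ
    (⋃ A ∈ {A : Fin k →₀ ℕ | MvPowerSeries.coeff A f ≠ 0},
      {fun i => (A i : ℝ)} + Qk k)


/-!
Every exponent of `f₁ f₂` is a sum of exponents of `f₁` and `f₂`, which gives
`N(f₁ f₂) ⊆ N(f₁) + N(f₂)`. Conversely, by Dickson's lemma `N(f₁ f₂)` is the convex hull of
finitely many exponents plus the orthant, hence closed, so by Hahn–Banach it suffices to compare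
minima of linear functionals `φ` bounded below on it; such a `φ` is monotone. Read `φ` as a real
weight on exponents and let `mᵢ` be the minimal weight on the support of `fᵢ`. The coefficients
of weight `m₁ + m₂` of `f₁ f₂` are those of the product of the weight-`mᵢ` components of the
`fᵢ`, which is nonzero because `K[[x]]` is a domain; so `φ` attains `m₁ + m₂` on `N(f₁ f₂)`.
-/

open Set

namespace MvPowerSeries

variable {σ R Γ : Type*}

theorem exists_coeff_ne_zero_of_coeff_mul_ne_zero [Semiring R] {f g : MvPowerSeries σ R}
    {D : σ →₀ ℕ} (hD : coeff D (f * g) ≠ 0) :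
    ∃ B C, B + C = D ∧ coeff B f ≠ 0 ∧ coeff C g ≠ 0 := by
  classical
  rw [coeff_mul] at hD
  obtain ⟨⟨B, C⟩, hBC, hne⟩ := Finset.exists_ne_zero_of_sum_ne_zero hD
  exact ⟨B, C, Finset.HasAntidiagonal.mem_antidiagonal.mp hBC, left_ne_zero_of_mul hne,
    right_ne_zero_of_mul hne⟩

theorem exists_min_weight_of_ne_zero [Finite σ] [Semiring R] [LinearOrder Γ]
    {w : (σ →₀ ℕ) → Γ} (hw : Monotone w) {f : MvPowerSeries σ R} (hf : f ≠ 0) :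
    ∃ A, coeff A f ≠ 0 ∧ ∀ B, coeff B f ≠ 0 → w A ≤ w B := by
  obtain ⟨A, hA, hAmin⟩ := IsPWO.exists_minimalFor w {A | coeff A f ≠ 0}
    ((isPWO_of_wellQuasiOrderedLE _).image_of_monotone hw)
    ((ne_zero_iff_exists_coeff_ne_zero f).mp hf)
  exact ⟨A, hA, fun B hB => (le_total (w A) (w B)).elim id (hAmin hB)⟩

section WeightComponent

variable [Semiring R] [AddCommMonoid Γ] [LinearOrder Γ] (w : (σ →₀ ℕ) →+ Γ)

noncomputable def weightComponent (m : Γ) (f : MvPowerSeries σ R) : MvPowerSeries σ R :=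
  fun A => if w A = m then coeff A f else 0

theorem coeff_weightComponent (m : Γ) (f : MvPowerSeries σ R) (A : σ →₀ ℕ) :
    coeff A (weightComponent w m f) = if w A = m then coeff A f else 0 :=
  rfl

theorem weightComponent_weight_ne_zero {f : MvPowerSeries σ R} {A : σ →₀ ℕ} (hA : coeff A f ≠ 0) :
    weightComponent w (w A) f ≠ 0 :=
  (ne_zero_iff_exists_coeff_ne_zero _).mpr ⟨A, by rwa [coeff_weightComponent, if_pos rfl]⟩

theorem weight_eq_of_coeff_weightComponent_mul_ne_zero {m n : Γ} {f g : MvPowerSeries σ R}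
    {D : σ →₀ ℕ} (hD : coeff D (weightComponent w m f * weightComponent w n g) ≠ 0) :
    w D = m + n := by
  obtain ⟨B, C, rfl, hB, hC⟩ := exists_coeff_ne_zero_of_coeff_mul_ne_zero hD
  rw [coeff_weightComponent, ite_ne_right_iff] at hB hC
  rw [map_add, hB.1, hC.1]

theorem coeff_weightComponent_mul [IsOrderedCancelAddMonoid Γ] {m n : Γ} {f g : MvPowerSeries σ R}
    (hf : ∀ B, coeff B f ≠ 0 → m ≤ w B) (hg : ∀ C, coeff C g ≠ 0 → n ≤ w C)
    {D : σ →₀ ℕ} (hD : w D = m + n) :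
    coeff D (weightComponent w m f * weightComponent w n g) = coeff D (f * g) := by
  classical
  rw [coeff_mul, coeff_mul]
  refine Finset.sum_congr rfl fun ⟨B, C⟩ hBC => ?_
  rw [Finset.HasAntidiagonal.mem_antidiagonal] at hBC
  simp only [coeff_weightComponent]
  by_cases hprod : coeff B f * coeff C g = 0
  · split_ifs <;> simp [hprod]
  · have hwBC : w B + w C = m + n := by rw [← map_add, hBC, hD]
    obtain ⟨hB, hC⟩ := (add_eq_add_iff_eq_and_eq (hf B (left_ne_zero_of_mul hprod))
      (hg C (right_ne_zero_of_mul hprod))).mp hwBC.symm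
    rw [if_pos hB.symm, if_pos hC.symm]

theorem exists_coeff_mul_ne_zero_weight_eq [IsOrderedCancelAddMonoid Γ] [NoZeroDivisors R]
    {f g : MvPowerSeries σ R} {A B : σ →₀ ℕ}
    (hA : coeff A f ≠ 0) (hAmin : ∀ A', coeff A' f ≠ 0 → w A ≤ w A')
    (hB : coeff B g ≠ 0) (hBmin : ∀ B', coeff B' g ≠ 0 → w B ≤ w B') :
    ∃ D, coeff D (f * g) ≠ 0 ∧ w D = w A + w B := by
  obtain ⟨D, hD⟩ := (ne_zero_iff_exists_coeff_ne_zero _).mp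
    (mul_ne_zero (weightComponent_weight_ne_zero w hA) (weightComponent_weight_ne_zero w hB))
  have hwD := weight_eq_of_coeff_weightComponent_mul_ne_zero w hD
  exact ⟨D, coeff_weightComponent_mul w hAmin hBmin hwD ▸ hD, hwD⟩

end WeightComponent

end MvPowerSeries

section ExponentVector

variable {σ : Type*}

noncomputable def exponentVector : (σ →₀ ℕ) →+ (σ → ℝ) where
  toFun A i := A i
  map_zero' := by ext; simp
  map_add' A B := by ext; simp

theorem exponentVector_mono : Monotone (exponentVector : (σ →₀ ℕ) → σ → ℝ) :=
  fun A B h i => show (A i : ℝ) ≤ B i from Nat.cast_le.mpr (h i)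

theorem exists_finite_convexHull_iUnion_Ici_eq [Finite σ] (S : Set (σ →₀ ℕ)) :
    ∃ W ⊆ S, W.Finite ∧
      convexHull ℝ (⋃ A ∈ S, Ici (exponentVector A)) =
        convexHull ℝ (exponentVector '' W) + Ici 0 := by
  refine ⟨{A | Minimal (· ∈ S) A}, fun _ hA => hA.prop,
    WellQuasiOrderedLE.finite_of_isAntichain (setOfPred_minimal_antichain _), ?_⟩
  refine subset_antisymm (convexHull_min ?_ ((convex_convexHull ℝ _).add (convex_Ici 0))) ?_
  · refine iUnion₂_subset fun A hA y hy => ?_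
    obtain ⟨B, hBA, hB⟩ := (isPWO_of_wellQuasiOrderedLE S).exists_le_minimal hA
    refine ⟨exponentVector B, subset_convexHull ℝ _ ⟨B, hB, rfl⟩, y - exponentVector B, ?_,
      add_sub_cancel _ _⟩
    exact sub_nonneg.mpr ((exponentVector_mono hBA).trans hy)
  · rw [← (convex_Ici (𝕜 := ℝ) (0 : σ → ℝ)).convexHull_eq, ← convexHull_add]
    refine convexHull_mono (add_subset_iff.mpr ?_)
    rintro _ ⟨A, hA, rfl⟩ q hq
    exact mem_biUnion hA.prop (mem_Ici.mpr (le_add_of_nonneg_right hq))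

theorem isClosed_convexHull_iUnion_Ici [Finite σ] (S : Set (σ →₀ ℕ)) :
    IsClosed (convexHull ℝ (⋃ A ∈ S, Ici (exponentVector A))) := by
  obtain ⟨W, -, hW, hS⟩ := exists_finite_convexHull_iUnion_Ici_eq S
  rw [hS]
  exact isClosed_Ici.add_left_of_isCompact ((hW.image _).isCompact_convexHull ℝ)

end ExponentVector

theorem nonneg_of_forall_lt_add_mul {a c u : ℝ} (h : ∀ t, 0 ≤ t → u < a + t * c) : 0 ≤ c := by
  by_contra! hc
  have hua := h 0 le_rfl
  have hcancel : (a - u) / -c * c = u - a := by rw [div_neg, neg_mul, div_mul_cancel₀ _ hc.ne]; ring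
  have := h ((a - u) / -c) (div_nonneg (by linarith) (by linarith))
  linarith

section NewtonPolyhedron

variable {k : ℕ} {K : Type*} [Field K]

theorem newtonPolyhedron_eq (f : MvPowerSeries (Fin k) K) :
    newtonPolyhedron f =
      convexHull ℝ (⋃ A ∈ {A | MvPowerSeries.coeff A f ≠ 0}, Ici (exponentVector A)) := by
  have hQ : Qk k = Ici 0 := rfl
  simp only [newtonPolyhedron, hQ, singleton_add, image_const_add_Ici, add_zero]
  rfl

theorem convex_newtonPolyhedron (f : MvPowerSeries (Fin k) K) : Convex ℝ (newtonPolyhedron f) :=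
  convex_convexHull ℝ _

theorem isClosed_newtonPolyhedron (f : MvPowerSeries (Fin k) K) :
    IsClosed (newtonPolyhedron f) :=
  newtonPolyhedron_eq f ▸ isClosed_convexHull_iUnion_Ici _

theorem mem_newtonPolyhedron_of_le {f : MvPowerSeries (Fin k) K} {A : Fin k →₀ ℕ}
    (hA : MvPowerSeries.coeff A f ≠ 0) {y : Fin k → ℝ} (hy : exponentVector A ≤ y) :
    y ∈ newtonPolyhedron f :=
  newtonPolyhedron_eq f ▸ subset_convexHull ℝ _ (mem_biUnion hA hy)

theorem ne_zero_of_mem_newtonPolyhedron {f : MvPowerSeries (Fin k) K} {y : Fin k → ℝ}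
    (hy : y ∈ newtonPolyhedron f) : f ≠ 0 := by
  rintro rfl
  simp [newtonPolyhedron_eq] at hy

theorem le_apply_of_mem_newtonPolyhedron {f : MvPowerSeries (Fin k) K}
    {φ : (Fin k → ℝ) →L[ℝ] ℝ} (hφ : Monotone φ) {m : ℝ}
    (hm : ∀ A, MvPowerSeries.coeff A f ≠ 0 → m ≤ φ (exponentVector A))
    {y : Fin k → ℝ} (hy : y ∈ newtonPolyhedron f) : m ≤ φ y := by
  rw [newtonPolyhedron_eq] at hy
  exact convexHull_min (iUnion₂_subset fun A hA z hz => (hm A hA).trans (hφ hz))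
    (convex_halfSpace_ge φ.toLinearMap.isLinear m) hy

theorem monotone_of_lt_apply_newtonPolyhedron {f : MvPowerSeries (Fin k) K} (hf : f ≠ 0)
    {φ : (Fin k → ℝ) →L[ℝ] ℝ} {u : ℝ} (hu : ∀ y ∈ newtonPolyhedron f, u < φ y) :
    Monotone φ := by
  obtain ⟨A, hA⟩ := (MvPowerSeries.ne_zero_iff_exists_coeff_ne_zero f).mp hf
  intro x y hxy
  suffices 0 ≤ φ (y - x) by rwa [map_sub, sub_nonneg] at this
  refine nonneg_of_forall_lt_add_mul (a := φ (exponentVector A)) (u := u) fun t ht => ?_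
  rw [← smul_eq_mul, ← map_smul, ← map_add]
  exact hu _ (mem_newtonPolyhedron_of_le hA
    (le_add_of_nonneg_right (smul_nonneg ht (sub_nonneg.mpr hxy))))

theorem newtonPolyhedron_mul_subset (f₁ f₂ : MvPowerSeries (Fin k) K) :
    newtonPolyhedron (f₁ * f₂) ⊆ newtonPolyhedron f₁ + newtonPolyhedron f₂ := by
  rw [newtonPolyhedron_eq (f₁ * f₂)]
  refine convexHull_min (iUnion₂_subset fun A hA y hy => ?_)
    ((convex_newtonPolyhedron f₁).add (convex_newtonPolyhedron f₂))
  obtain ⟨B, C, rfl, hB, hC⟩ := MvPowerSeries.exists_coeff_ne_zero_of_coeff_mul_ne_zero hA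
  refine ⟨y - exponentVector C, mem_newtonPolyhedron_of_le hB ?_,
    exponentVector C, mem_newtonPolyhedron_of_le hC le_rfl, sub_add_cancel _ _⟩
  rwa [le_sub_iff_add_le, ← map_add]

theorem add_mem_newtonPolyhedron_mul {f₁ f₂ : MvPowerSeries (Fin k) K} {b c : Fin k → ℝ}
    (hb : b ∈ newtonPolyhedron f₁) (hc : c ∈ newtonPolyhedron f₂) :
    b + c ∈ newtonPolyhedron (f₁ * f₂) := by
  have hf₁ := ne_zero_of_mem_newtonPolyhedron hb
  have hf₂ := ne_zero_of_mem_newtonPolyhedron hc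
  by_contra hbc
  obtain ⟨φ, u, hbcu, hu⟩ := geometric_hahn_banach_point_closed
    (convex_newtonPolyhedron _) (isClosed_newtonPolyhedron _) hbc
  have hφ : Monotone φ := monotone_of_lt_apply_newtonPolyhedron (mul_ne_zero hf₁ hf₂) hu
  let w : (Fin k →₀ ℕ) →+ ℝ := (φ : (Fin k → ℝ) →+ ℝ).comp exponentVector
  have hw : Monotone w := hφ.comp exponentVector_mono
  obtain ⟨A₁, hA₁, hA₁min⟩ := MvPowerSeries.exists_min_weight_of_ne_zero hw hf₁
  obtain ⟨A₂, hA₂, hA₂min⟩ := MvPowerSeries.exists_min_weight_of_ne_zero hw hf₂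
  obtain ⟨D, hD, hwD⟩ := MvPowerSeries.exists_coeff_mul_ne_zero_weight_eq w hA₁ hA₁min hA₂ hA₂min
  have hb₁ : w A₁ ≤ φ b := le_apply_of_mem_newtonPolyhedron hφ hA₁min hb
  have hc₂ : w A₂ ≤ φ c := le_apply_of_mem_newtonPolyhedron hφ hA₂min hc
  have hDu : u < w D := hu _ (mem_newtonPolyhedron_of_le hD le_rfl)
  rw [map_add] at hbcu
  linarith

end NewtonPolyhedron

theorem newtonPolyhedron_mul_general {k : ℕ} {K : Type*} [Field K]
    (f₁ f₂ : MvPowerSeries (Fin k) K) :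
    newtonPolyhedron (f₁ * f₂) =
      convexHull ℝ (newtonPolyhedron f₁ + newtonPolyhedron f₂) := by
  refine ((newtonPolyhedron_mul_subset f₁ f₂).trans (subset_convexHull ℝ _)).antisymm ?_
  exact convexHull_min (add_subset_iff.mpr fun b hb c hc => add_mem_newtonPolyhedron_mul hb hc)
    (convex_newtonPolyhedron _)

/-- For power series `f₁, f₂` over a field with `f₁ f₂ ≠ 0`, the Newton polyhedron of the
product is the sum of the Newton polyhedra (convex hull of the Minkowski sum). -/
theorem newtonPolyhedron_mul {k : ℕ} {K : Type*} [Field K]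
    (f₁ f₂ : MvPowerSeries (Fin k) K) (h : f₁ * f₂ ≠ 0) :
    newtonPolyhedron (f₁ * f₂) =
      convexHull ℝ (newtonPolyhedron f₁ + newtonPolyhedron f₂) :=
  newtonPolyhedron_mul_general f₁ f₂
end

section
/- The product operation on Newton polygons, defined on elementary polygons by {ℓ/h} * {ℓ'/h'} = {ℓℓ' / min(ℓh', ℓ'h)} and extended bilinearly over decompositions into elementary polygons, is well-defined (independent of the chosen decompositions), commutative, associative, and distributive over the sum of polygons. -/
/-!
Write `sumList L = Q2 + ∑ [(0, h), (ℓ, 0)]`, the quadrant plus the Minkowski sum of the compact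
edges. For lists with positive entries the polygon and the function
`u ↦ lengthAbove L u`, the total length of the edges of slope `h / ℓ > u`, determine each other:
edges of equal slope merge into one, and conversely `lengthAbove L u` is the right derivative
at `u ≥ 0` of the support function `u ↦ min {u x + y | (x, y) ∈ sumList L} = ∑ min h (u ℓ)`.
The edge of `{ℓ/h} * {ℓ'/h'}` has length `ℓ ℓ'` and the smaller of the two slopes, so
`lengthAbove` turns the product into the pointwise product of functions and concatenation into
their sum; the four laws are then those of `ℝ`.
-/

open Pointwise MeasureTheory

/-- The positive quadrant in `ℝ²`. -/
def Q2 : Set (ℝ × ℝ) := {p | 0 ≤ p.1 ∧ 0 ≤ p.2}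

/-- The elementary Newton polygon `{ℓ/h}`. -/
noncomputable def elemPoly (l h : ℝ) : Set (ℝ × ℝ) :=
  convexHull ℝ (({((0 : ℝ), h)} + Q2) ∪ ({(l, (0 : ℝ))} + Q2))

/-- The sum (convex hull of the Minkowski sum) of the elementary polygons listed in `L`. -/
noncomputable def sumList (L : List (ℝ × ℝ)) : Set (ℝ × ℝ) :=
  convexHull ℝ (Q2 + (L.map (fun p => elemPoly p.1 p.2)).sum)

/-- The sum of two Newton polygons: convex hull of the Minkowski sum. -/
noncomputable def polySum (N₁ N₂ : Set (ℝ × ℝ)) : Set (ℝ × ℝ) :=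
  convexHull ℝ (N₁ + N₂)

/-- The product of decompositions: on elementary polygons,
`{ℓ/h} * {ℓ'/h'} = {ℓℓ' / min(ℓh', ℓ'h)}`, extended bilinearly. -/
def prodList (L₁ L₂ : List (ℝ × ℝ)) : List (ℝ × ℝ) :=
  L₁.flatMap fun p => L₂.map fun q => (p.1 * q.1, min (p.1 * q.2) (q.1 * p.2))

/-- All lengths and heights in the list are positive. -/
def PosList (L : List (ℝ × ℝ)) : Prop := ∀ p ∈ L, 0 < p.1 ∧ 0 < p.2

open Filter Topology

theorem convex_Q2 : Convex ℝ Q2 := convex_Ici (0 : ℝ × ℝ)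

theorem zero_mem_Q2 : (0 : ℝ × ℝ) ∈ Q2 := ⟨le_rfl, le_rfl⟩

theorem Q2_add_Q2 : Q2 + Q2 = Q2 := by
  refine subset_antisymm ?_ fun x hx => ⟨x, hx, 0, zero_mem_Q2, add_zero x⟩
  rintro _ ⟨a, ha, b, hb, rfl⟩
  exact ⟨add_nonneg ha.1 hb.1, add_nonneg ha.2 hb.2⟩

theorem elemPoly_eq_segment_add_Q2 (l h : ℝ) : elemPoly l h = segment ℝ (0, h) (l, 0) + Q2 := by
  rw [elemPoly, ← Set.union_add, Set.singleton_union, convexHull_add, convexHull_pair,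
    convex_Q2.convexHull_eq]

def edgeSum (L : List (ℝ × ℝ)) : Set (ℝ × ℝ) :=
  (L.map fun p => segment ℝ ((0 : ℝ), p.2) (p.1, (0 : ℝ))).sum

theorem convex_edgeSum (L : List (ℝ × ℝ)) : Convex ℝ (edgeSum L) :=
  List.sum_induction _ (fun _ _ => Convex.add) convex_zero <| by
    simp only [List.mem_map]
    rintro _ ⟨p, -, rfl⟩
    exact convex_segment _ _

theorem Q2_add_sum_elemPoly (L : List (ℝ × ℝ)) :
    Q2 + (L.map fun p => elemPoly p.1 p.2).sum = Q2 + edgeSum L := by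
  induction L with
  | nil => rfl
  | cons p L ih =>
    rw [List.map_cons, List.sum_cons, elemPoly_eq_segment_add_Q2, add_assoc, add_left_comm,
      ← add_assoc Q2 Q2, Q2_add_Q2, ih]
    exact add_left_comm _ _ _

theorem sumList_eq_Q2_add_edgeSum (L : List (ℝ × ℝ)) : sumList L = Q2 + edgeSum L := by
  rw [sumList, Q2_add_sum_elemPoly]
  exact (convex_Q2.add (convex_edgeSum L)).convexHull_eq

theorem sumList_append (A B : List (ℝ × ℝ)) :
    sumList (A ++ B) = polySum (sumList A) (sumList B) := by
  have hsum : edgeSum (A ++ B) = edgeSum A + edgeSum B := by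
    simp only [edgeSum, List.map_append, List.sum_append]
  rw [polySum, sumList_eq_Q2_add_edgeSum, sumList_eq_Q2_add_edgeSum, sumList_eq_Q2_add_edgeSum,
    add_add_add_comm, Q2_add_Q2, hsum]
  exact (convex_Q2.add ((convex_edgeSum A).add (convex_edgeSum B))).convexHull_eq.symm

theorem isGLB_image_list_sum {M F ι : Type*} [AddCommMonoid M] [FunLike F M ℝ]
    [AddMonoidHomClass F M ℝ] (φ : F) {A : ι → Set M} {a : ι → ℝ} (L : List ι)
    (h : ∀ i ∈ L, IsGLB (φ '' A i) (a i)) : IsGLB (φ '' (L.map A).sum) (L.map a).sum := by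
  induction L with
  | nil => simp
  | cons i L ih =>
    simp only [List.map_cons, List.sum_cons, Set.image_add]
    exact (h i List.mem_cons_self).add (ih fun j hj => h j (List.mem_cons_of_mem i hj))

theorem isGLB_image_segment {E : Type*} [AddCommGroup E] [Module ℝ E] (φ : E →ₗ[ℝ] ℝ) (x y : E) :
    IsGLB (φ '' segment ℝ x y) (min (φ x) (φ y)) := by
  rw [← φ.coe_toAffineMap, image_segment, segment_eq_uIcc]
  exact (isLeast_Icc inf_le_sup).isGLB

theorem isGLB_image_sumList (φ : ℝ × ℝ →ₗ[ℝ] ℝ) (hφ : ∀ x ∈ Q2, 0 ≤ φ x) (L : List (ℝ × ℝ)) :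
    IsGLB (φ '' sumList L) (L.map fun p => min (φ (0, p.2)) (φ (p.1, 0))).sum := by
  have hQ2 : IsGLB (φ '' Q2) 0 :=
    IsLeast.isGLB ⟨⟨0, zero_mem_Q2, map_zero φ⟩, Set.forall_mem_image.2 hφ⟩
  rw [sumList_eq_Q2_add_edgeSum, Set.image_add, ← zero_add (List.sum _)]
  exact hQ2.add (isGLB_image_list_sum φ L fun p _ => isGLB_image_segment φ _ _)

/-- The value at `u ≥ 0` of the support function `min {u x + y | (x, y) ∈ sumList L}`. -/
def supportFn (L : List (ℝ × ℝ)) (u : ℝ) : ℝ := (L.map fun p => min p.2 (u * p.1)).sum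

theorem supportFn_eq_of_sumList_eq {L L' : List (ℝ × ℝ)} (h : sumList L = sumList L') {u : ℝ}
    (hu : 0 ≤ u) : supportFn L u = supportFn L' u := by
  let φ : ℝ × ℝ →ₗ[ℝ] ℝ := u • LinearMap.fst ℝ ℝ ℝ + LinearMap.snd ℝ ℝ ℝ
  have hφ : ∀ x ∈ Q2, 0 ≤ φ x := fun x ⟨hx₁, hx₂⟩ => by
    simp only [φ, LinearMap.add_apply, LinearMap.smul_apply, LinearMap.fst_apply,
      LinearMap.snd_apply, smul_eq_mul]
    positivity
  have key (L : List (ℝ × ℝ)) : IsGLB (φ '' sumList L) (supportFn L u) := by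
    simpa [φ, supportFn] using isGLB_image_sumList φ hφ L
  exact (key L).unique (h ▸ key L')

noncomputable def edgeSlope (p : ℝ × ℝ) : ℝ := p.2 / p.1

noncomputable def lengthAbove (L : List (ℝ × ℝ)) (u : ℝ) : ℝ :=
  (L.map fun p => if u < edgeSlope p then p.1 else 0).sum

noncomputable def slopeLength (L : List (ℝ × ℝ)) (s : ℝ) : ℝ :=
  (L.map fun p => if edgeSlope p = s then p.1 else 0).sum

theorem edgeSlope_pos {p : ℝ × ℝ} (hp : 0 < p.1 ∧ 0 < p.2) : 0 < edgeSlope p :=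
  div_pos hp.2 hp.1

theorem eventually_forall_le_abs_sub (T : List ℝ) (a : ℝ) :
    ∀ᶠ δ in 𝓝[>] (0 : ℝ), ∀ t ∈ T, t ≠ a → δ ≤ |t - a| := by
  refine (eventually_all_finite T.finite_toSet).2 fun t _ => ?_
  by_cases hta : t = a
  · exact Eventually.of_forall fun _ h => absurd hta h
  · exact (eventually_nhdsWithin_of_eventually_nhds
      (eventually_lt_nhds (abs_sub_pos.2 hta))).mono fun _ hδ _ => hδ.le

theorem min_add_eq_min_add_ite {t u δ : ℝ} (hδ : 0 ≤ δ) (hgap : t ≠ u → δ ≤ |t - u|) :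
    min t (u + δ) = min t u + if u < t then δ else 0 := by
  split_ifs with hut
  · have : δ ≤ t - u := abs_of_pos (sub_pos.2 hut) ▸ hgap hut.ne'
    rw [min_eq_right (by linarith), min_eq_right hut.le]
  · rw [not_lt] at hut
    rw [min_eq_left (by linarith), min_eq_left hut, add_zero]

theorem ite_sub_lt_eq_ite_add_ite {t s δ l : ℝ} (hδ : 0 < δ) (hgap : t ≠ s → δ ≤ |t - s|) :
    (if s - δ < t then l else 0) = (if s < t then l else 0) + if t = s then l else 0 := by
  rcases lt_trichotomy t s with hts | rfl | hts
  · have : δ ≤ s - t := by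
      simpa only [abs_sub_comm t s, abs_of_pos (sub_pos.2 hts)] using hgap hts.ne
    simp [hts.ne, not_lt.2 hts.le, show ¬ s - δ < t by linarith]
  · simp [hδ]
  · simp [hts, hts.ne', show s - δ < t by linarith]

theorem supportFn_add {L : List (ℝ × ℝ)} (hL : PosList L) {u δ : ℝ} (hδ : 0 ≤ δ)
    (hgap : ∀ t ∈ L.map edgeSlope, t ≠ u → δ ≤ |t - u|) :
    supportFn L (u + δ) = supportFn L u + δ * lengthAbove L u := by
  have hedge : ∀ p ∈ L, ∀ v, min p.2 (v * p.1) = p.1 * min (edgeSlope p) v := fun p hp v => by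
    rw [mul_min_of_nonneg _ _ (hL p hp).1.le, edgeSlope, mul_div_cancel₀ _ (hL p hp).1.ne',
      mul_comm]
  rw [supportFn, supportFn, lengthAbove, ← List.sum_map_mul_left, ← List.sum_map_add]
  refine congrArg List.sum (List.map_congr_left fun p hp => ?_)
  rw [hedge p hp, hedge p hp, min_add_eq_min_add_ite hδ (hgap _ (List.mem_map_of_mem hp))]
  split_ifs <;> ring

theorem lengthAbove_sub {L : List (ℝ × ℝ)} {s δ : ℝ} (hδ : 0 < δ)
    (hgap : ∀ t ∈ L.map edgeSlope, t ≠ s → δ ≤ |t - s|) :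
    lengthAbove L (s - δ) = lengthAbove L s + slopeLength L s := by
  rw [lengthAbove, lengthAbove, slopeLength, ← List.sum_map_add]
  exact congrArg List.sum (List.map_congr_left fun p hp =>
    ite_sub_lt_eq_ite_add_ite hδ (hgap _ (List.mem_map_of_mem hp)))

theorem lengthAbove_max_zero {L : List (ℝ × ℝ)} (hL : PosList L) (u : ℝ) :
    lengthAbove L (max u 0) = lengthAbove L u :=
  congrArg List.sum (List.map_congr_left fun p hp => by
    simp only [max_lt_iff, edgeSlope_pos (hL p hp), and_true])

theorem lengthAbove_eq_of_sumList_eq {L L' : List (ℝ × ℝ)} (hL : PosList L) (hL' : PosList L')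
    (h : sumList L = sumList L') (u : ℝ) : lengthAbove L u = lengthAbove L' u := by
  rw [← lengthAbove_max_zero hL, ← lengthAbove_max_zero hL']
  have hv : 0 ≤ max u 0 := le_max_right u 0
  obtain ⟨δ, ⟨hgap, hgap'⟩, hδ⟩ := (((eventually_forall_le_abs_sub _ (max u 0)).and
    (eventually_forall_le_abs_sub _ (max u 0))).and self_mem_nhdsWithin).exists
  have hshift := supportFn_eq_of_sumList_eq h (add_nonneg hv hδ.le)
  rw [supportFn_add hL hδ.le hgap, supportFn_add hL' hδ.le hgap',
    supportFn_eq_of_sumList_eq h hv] at hshift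
  exact mul_left_cancel₀ hδ.ne' (add_left_cancel hshift)

theorem slopeLength_eq_of_lengthAbove_eq {L L' : List (ℝ × ℝ)}
    (h : ∀ u, lengthAbove L u = lengthAbove L' u) (s : ℝ) : slopeLength L s = slopeLength L' s := by
  obtain ⟨δ, ⟨hgap, hgap'⟩, hδ⟩ := (((eventually_forall_le_abs_sub _ s).and
    (eventually_forall_le_abs_sub _ s)).and self_mem_nhdsWithin).exists
  have hjump := h (s - δ)
  rw [lengthAbove_sub hδ hgap, lengthAbove_sub hδ hgap', h s] at hjump
  exact add_left_cancel hjump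

noncomputable def unitEdge (s : ℝ) : Set (ℝ × ℝ) := segment ℝ ((0 : ℝ), s) (1, (0 : ℝ))

theorem convex_unitEdge (s : ℝ) : Convex ℝ (unitEdge s) := convex_segment _ _

theorem zero_smul_unitEdge (s : ℝ) : (0 : ℝ) • unitEdge s = 0 :=
  Set.zero_smul_set ⟨_, left_mem_segment ℝ _ _⟩

theorem smul_segment {𝕜 E : Type*} [CommRing 𝕜] [PartialOrder 𝕜] [IsOrderedRing 𝕜]
    [AddCommGroup E] [Module 𝕜 E] (c : 𝕜) (x y : E) :
    c • segment 𝕜 x y = segment 𝕜 (c • x) (c • y) := by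
  rw [← Set.image_smul]
  exact image_segment 𝕜 (LinearMap.lsmul 𝕜 E c).toAffineMap x y

theorem segment_eq_smul_unitEdge {p : ℝ × ℝ} (hp : p.1 ≠ 0) :
    segment ℝ ((0 : ℝ), p.2) (p.1, (0 : ℝ)) = p.1 • unitEdge (edgeSlope p) := by
  simp [unitEdge, smul_segment, edgeSlope, mul_div_cancel₀ _ hp]

theorem slopeLength_nonneg {L : List (ℝ × ℝ)} (hL : PosList L) (s : ℝ) : 0 ≤ slopeLength L s :=
  List.sum_nonneg <| by
    simp only [List.mem_map]
    rintro _ ⟨p, hp, rfl⟩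
    split_ifs
    exacts [(hL p hp).1.le, le_rfl]

theorem edgeSum_eq_sum_slopeLength {L : List (ℝ × ℝ)} (hL : PosList L) {S : Finset ℝ}
    (hS : ∀ p ∈ L, edgeSlope p ∈ S) : edgeSum L = ∑ s ∈ S, slopeLength L s • unitEdge s := by
  induction L with
  | nil => simp [edgeSum, slopeLength, zero_smul_unitEdge]
  | cons p L ih =>
    have hp := hL p List.mem_cons_self
    have hL' : PosList L := fun q hq => hL q (List.mem_cons_of_mem p hq)
    have hsplit : ∀ s ∈ S, slopeLength (p :: L) s • unitEdge s =
        (if edgeSlope p = s then p.1 • unitEdge s else 0) + slopeLength L s • unitEdge s := by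
      intro s _
      have hhead : 0 ≤ if edgeSlope p = s then p.1 else 0 := by split_ifs <;> simp [hp.1.le]
      rw [slopeLength, List.map_cons, List.sum_cons, ← slopeLength,
        (convex_unitEdge s).add_smul hhead (slopeLength_nonneg hL' s)]
      split_ifs
      · rfl
      · rw [zero_smul_unitEdge]
    rw [Finset.sum_congr rfl hsplit, Finset.sum_add_distrib, Finset.sum_ite_eq,
      if_pos (hS p List.mem_cons_self), ← ih hL' fun q hq => hS q (List.mem_cons_of_mem p hq),
      edgeSum, List.map_cons, List.sum_cons, segment_eq_smul_unitEdge hp.1.ne']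
    rfl

theorem sumList_eq_of_slopeLength_eq {L L' : List (ℝ × ℝ)} (hL : PosList L) (hL' : PosList L')
    (h : ∀ s, slopeLength L s = slopeLength L' s) : sumList L = sumList L' := by
  classical
  let S := ((L ++ L').map edgeSlope).toFinset
  have hS : ∀ p ∈ L ++ L', edgeSlope p ∈ S := fun p hp =>
    List.mem_toFinset.2 (List.mem_map_of_mem hp)
  rw [sumList_eq_Q2_add_edgeSum, sumList_eq_Q2_add_edgeSum,
    edgeSum_eq_sum_slopeLength hL fun p hp => hS p (List.mem_append_left L' hp),
    edgeSum_eq_sum_slopeLength hL' fun p hp => hS p (List.mem_append_right L hp), funext h]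

theorem sumList_eq_sumList_iff {L L' : List (ℝ × ℝ)} (hL : PosList L) (hL' : PosList L') :
    sumList L = sumList L' ↔ ∀ u, lengthAbove L u = lengthAbove L' u :=
  ⟨lengthAbove_eq_of_sumList_eq hL hL', fun h =>
    sumList_eq_of_slopeLength_eq hL hL' (slopeLength_eq_of_lengthAbove_eq h)⟩

theorem PosList.prodList {A B : List (ℝ × ℝ)} (hA : PosList A) (hB : PosList B) :
    PosList (prodList A B) := by
  intro x hx
  obtain ⟨p, hp, hx⟩ := List.mem_flatMap.1 hx
  obtain ⟨q, hq, rfl⟩ := List.mem_map.1 hx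
  obtain ⟨hp₁, hp₂⟩ := hA p hp
  obtain ⟨hq₁, hq₂⟩ := hB q hq
  exact ⟨mul_pos hp₁ hq₁, lt_min (mul_pos hp₁ hq₂) (mul_pos hq₁ hp₂)⟩

theorem PosList.append {A B : List (ℝ × ℝ)} (hA : PosList A) (hB : PosList B) :
    PosList (A ++ B) :=
  List.forall_mem_append.2 ⟨hA, hB⟩

theorem edgeSlope_mul {p q : ℝ × ℝ} (hp : 0 < p.1) (hq : 0 < q.1) :
    edgeSlope (p.1 * q.1, min (p.1 * q.2) (q.1 * p.2)) = min (edgeSlope p) (edgeSlope q) := by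
  rw [edgeSlope, ← min_div_div_right (mul_pos hp hq).le, mul_div_mul_left _ _ hp.ne',
    mul_comm p.1, mul_div_mul_left _ _ hq.ne', min_comm]
  rfl

theorem lengthAbove_prodList {A B : List (ℝ × ℝ)} (hA : PosList A) (hB : PosList B) (u : ℝ) :
    lengthAbove (prodList A B) u = lengthAbove A u * lengthAbove B u := by
  simp only [lengthAbove, prodList, List.flatMap, List.map_flatten, List.sum_flatten, List.map_map]
  rw [← List.sum_map_mul_right]
  refine congrArg List.sum (List.map_congr_left fun p hp => ?_)
  rw [Function.comp_apply, Function.comp_apply, ← List.sum_map_mul_left, List.map_map]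
  refine congrArg List.sum (List.map_congr_left fun q hq => ?_)
  simp only [Function.comp_apply, edgeSlope_mul (hA p hp).1 (hB q hq).1, lt_min_iff]
  split_ifs <;> simp_all

theorem lengthAbove_append (A B : List (ℝ × ℝ)) (u : ℝ) :
    lengthAbove (A ++ B) u = lengthAbove A u + lengthAbove B u := by
  simp [lengthAbove]

/-- The product of Newton polygons is well defined (independent of the decompositions into
elementary polygons), commutative, associative, and distributive over the sum. -/
theorem prod_welldef_comm_assoc_distrib :
    (∀ L₁ L₂ L₁' L₂' : List (ℝ × ℝ), PosList L₁ → PosList L₂ → PosList L₁' → PosList L₂' →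
      sumList L₁ = sumList L₁' → sumList L₂ = sumList L₂' →
      sumList (prodList L₁ L₂) = sumList (prodList L₁' L₂')) ∧
    (∀ L₁ L₂ : List (ℝ × ℝ), PosList L₁ → PosList L₂ →
      sumList (prodList L₁ L₂) = sumList (prodList L₂ L₁)) ∧
    (∀ L₁ L₂ L₃ : List (ℝ × ℝ), PosList L₁ → PosList L₂ → PosList L₃ →
      sumList (prodList (prodList L₁ L₂) L₃) = sumList (prodList L₁ (prodList L₂ L₃))) ∧
    (∀ L₁ L₂ L₃ : List (ℝ × ℝ), PosList L₁ → PosList L₂ → PosList L₃ →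
      sumList (prodList L₁ (L₂ ++ L₃)) =
        polySum (sumList (prodList L₁ L₂)) (sumList (prodList L₁ L₃))) := by
  refine ⟨fun L₁ L₂ L₁' L₂' h₁ h₂ h₁' h₂' e₁ e₂ => ?_, fun L₁ L₂ h₁ h₂ => ?_,
    fun L₁ L₂ L₃ h₁ h₂ h₃ => ?_, fun L₁ L₂ L₃ h₁ h₂ h₃ => ?_⟩
  · rw [sumList_eq_sumList_iff h₁ h₁'] at e₁
    rw [sumList_eq_sumList_iff h₂ h₂'] at e₂
    refine (sumList_eq_sumList_iff (h₁.prodList h₂) (h₁'.prodList h₂')).2 fun u => ?_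
    rw [lengthAbove_prodList h₁ h₂, lengthAbove_prodList h₁' h₂', e₁, e₂]
  · refine (sumList_eq_sumList_iff (h₁.prodList h₂) (h₂.prodList h₁)).2 fun u => ?_
    rw [lengthAbove_prodList h₁ h₂, lengthAbove_prodList h₂ h₁, mul_comm]
  · refine (sumList_eq_sumList_iff ((h₁.prodList h₂).prodList h₃)
      (h₁.prodList (h₂.prodList h₃))).2 fun u => ?_
    rw [lengthAbove_prodList (h₁.prodList h₂) h₃, lengthAbove_prodList h₁ h₂,
      lengthAbove_prodList h₁ (h₂.prodList h₃), lengthAbove_prodList h₂ h₃, mul_assoc]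
  · rw [← sumList_append]
    refine (sumList_eq_sumList_iff (h₁.prodList (h₂.append h₃))
      ((h₁.prodList h₂).append (h₁.prodList h₃))).2 fun u => ?_
    rw [lengthAbove_append, lengthAbove_prodList h₁ (h₂.append h₃), lengthAbove_append,
      lengthAbove_prodList h₁ h₂, lengthAbove_prodList h₁ h₃, mul_add]
end
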